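/- arXiv:1706.08892 — 2 statements merged into one kernel-verified Lean document; each statement's English description precedes it below -/
import Mathlib

section
/- Let a, γ : [0,∞) → ℝ be continuous and bounded above and below by positive constants, let k > 0, and let p : [0,∞) → ℝ be a positive bounded differentiable solution of z'(t) = a(t)z(t) − z(t)² − kγ(t). Assume I := ∫₀^∞ exp(∫₀^t (a(s) − 2p(s)) ds) dt < ∞, that a(t) − 2p(t) ≤ 0 for all sufficiently large t, and that a(t) − 2p(t) → 0 as t → ∞. Then every differentiable solution z : [0,∞) → ℝ of the same equation with z(0) ≥ p(0) − 1/I satisfies z(t) − p(t) → 0 as t → ∞. -/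
/-!
The difference `w = z - p` solves the Bernoulli equation `w' = q w - w²` with `q = a - 2p`.
Either `w ≡ 0`, or `w` never vanishes and `1/w` solves a linear equation; with `E t = exp ∫₀ᵗ q`
this gives `E t / w t = 1 / w 0 + ∫₀ᵗ E`. The hypothesis `w 0 ≥ -1/I` keeps the denominator
`1 / w 0 + ∫₀ᵗ E` away from zero by a fixed multiple of the tail `∫ₜ^∞ E`, and `q → 0` forces
`E t = o(∫ₜ^∞ E)`, since then `E` decays slower than any exponential.
-/

open Real Filter MeasureTheory Set intervalIntegral

open scoped Topology

theorem ContinuousOn.hasDerivWithinAt_integral_Ici {E : Type*} [NormedAddCommGroup E]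
    [NormedSpace ℝ E] [CompleteSpace E] {f : ℝ → E} {a t : ℝ} (hf : ContinuousOn f (Ici a))
    (ht : a ≤ t) : HasDerivWithinAt (fun x => ∫ s in a..x, f s) (f t) (Ici a) t := by
  have hIcc : Icc a (t + 1) ⊆ Ici a := Icc_subset_Ici_self
  have : Fact (t ∈ Icc a (t + 1)) := ⟨⟨ht, by linarith⟩⟩
  have hmem : Icc a (t + 1) ∈ 𝓝[Ici a] t := by
    rw [← Ici_inter_Iic]; exact inter_mem_nhdsWithin _ (Iic_mem_nhds (by linarith))
  refine HasDerivWithinAt.mono_of_mem_nhdsWithin ?_ hmem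
  refine integral_hasDerivWithinAt_right ((hf.mono ?_).intervalIntegrable)
    ((hf.mono hIcc).stronglyMeasurableAtFilter_nhdsWithin measurableSet_Icc t)
    ((hf t ht).mono hIcc)
  rw [uIcc_of_le ht]; exact Icc_subset_Ici_self

theorem eq_of_hasDerivWithinAt_zero_Ici {f : ℝ → ℝ} {a : ℝ}
    (hf : ∀ t ≥ a, HasDerivWithinAt f 0 (Ici a) t) {t : ℝ} (ht : a ≤ t) : f t = f a :=
  constant_of_has_deriv_right_zero
    (fun s hs => (hf s hs.1).continuousWithinAt.mono Icc_subset_Ici_self)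
    (fun s hs => (hf s hs.1).mono (Ici_subset_Ici.mpr hs.1)) t ⟨ht, le_rfl⟩

theorem eq_mul_exp_integral_of_hasDerivWithinAt {g w : ℝ → ℝ} {a : ℝ}
    (hg : ContinuousOn g (Ici a)) (hw : ∀ t ≥ a, HasDerivWithinAt w (g t * w t) (Ici a) t)
    {t : ℝ} (ht : a ≤ t) : w t = w a * exp (∫ s in a..t, g s) := by
  have hconst : ∀ s ≥ a,
      HasDerivWithinAt (fun x => w x * exp (-∫ r in a..x, g r)) 0 (Ici a) s := fun s hs =>
    ((hw s hs).fun_mul (hg.hasDerivWithinAt_integral_Ici hs).neg.exp).congr_deriv (by ring)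
  have h := eq_of_hasDerivWithinAt_zero_Ici hconst ht
  rw [integral_same, neg_zero, exp_zero, mul_one, exp_neg, ← div_eq_mul_inv,
    div_eq_iff (exp_ne_zero _)] at h
  exact h

theorem inv_mul_exp_integral_eq_of_hasDerivWithinAt {q w : ℝ → ℝ} {a : ℝ}
    (hq : ContinuousOn q (Ici a))
    (hw : ∀ t ≥ a, HasDerivWithinAt w (q t * w t - w t ^ 2) (Ici a) t)
    (hw_ne : ∀ t ≥ a, w t ≠ 0) {t : ℝ} (ht : a ≤ t) :
    (w t)⁻¹ * exp (∫ s in a..t, q s) = (w a)⁻¹ + ∫ s in a..t, exp (∫ r in a..s, q r) := by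
  have hE : ∀ s ≥ a, HasDerivWithinAt (fun x => exp (∫ r in a..x, q r))
      (exp (∫ r in a..s, q r) * q s) (Ici a) s :=
    fun s hs => (hq.hasDerivWithinAt_integral_Ici hs).exp
  have hE_cont : ContinuousOn (fun x => exp (∫ r in a..x, q r)) (Ici a) :=
    fun s hs => (hE s hs).continuousWithinAt
  have hconst : ∀ s ≥ a, HasDerivWithinAt
      (fun x => (w x)⁻¹ * exp (∫ r in a..x, q r) - ∫ r in a..x, exp (∫ u in a..r, q u))
      0 (Ici a) s := by
    intro s hs
    refine ((((hw s hs).fun_inv (hw_ne s hs)).fun_mul (hE s hs)).fun_sub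
      (hE_cont.hasDerivWithinAt_integral_Ici hs)).congr_deriv ?_
    field_simp [hw_ne s hs]
    ring
  have h := eq_of_hasDerivWithinAt_zero_Ici hconst ht
  simp only [integral_same, exp_zero, mul_one, sub_zero] at h
  linarith

theorem integral_Ioi_exp_neg_mul_sub {ε : ℝ} (hε : 0 < ε) (t : ℝ) :
    ∫ s in Ioi t, exp (-(ε * (s - t))) = ε⁻¹ := by
  have h : ∀ s, exp (-(ε * (s - t))) = exp (ε * t) * exp (-ε * s) := fun s => by
    rw [← exp_add]; ring_nf
  simp_rw [h]
  rw [MeasureTheory.integral_const_mul, integral_exp_mul_Ioi (by linarith) t, neg_mul, exp_neg]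
  field_simp

theorem div_le_setIntegral_Ioi_of_mul_exp_le {g : ℝ → ℝ} {c ε t : ℝ} (hε : 0 < ε)
    (hg : IntegrableOn g (Ioi t)) (hle : ∀ s > t, c * exp (-(ε * (s - t))) ≤ g s) :
    c / ε ≤ ∫ s in Ioi t, g s := by
  have hexp : IntegrableOn (fun s => exp (-(ε * (s - t)))) (Ioi t) :=
    Integrable.of_integral_ne_zero (by rw [integral_Ioi_exp_neg_mul_sub hε]; positivity)
  calc c / ε = ∫ s in Ioi t, c * exp (-(ε * (s - t))) := by
        rw [MeasureTheory.integral_const_mul, integral_Ioi_exp_neg_mul_sub hε, div_eq_mul_inv]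
    _ ≤ ∫ s in Ioi t, g s := setIntegral_mono_on (hexp.const_mul c) hg measurableSet_Ioi hle

theorem exp_integral_mul_exp_le {q : ℝ → ℝ} {a ε t s : ℝ} (hq : ContinuousOn q (Ici a))
    (hat : a ≤ t) (hts : t ≤ s) (hqε : ∀ r ∈ Icc t s, -ε ≤ q r) :
    exp (∫ r in a..t, q r) * exp (-(ε * (s - t))) ≤ exp (∫ r in a..s, q r) := by
  have hint : ∀ {x y}, a ≤ x → x ≤ y → IntervalIntegrable q volume x y := fun hax hxy =>
    (hq.mono (by rw [uIcc_of_le hxy]; exact fun r hr => hax.trans hr.1)).intervalIntegrable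
  rw [← exp_add, exp_le_exp, ← integral_add_adjacent_intervals (hint le_rfl hat) (hint hat hts)]
  have h := integral_mono_on hts intervalIntegrable_const (hint hat hts) hqε
  rw [intervalIntegral.integral_const, smul_eq_mul] at h
  linarith

theorem setIntegral_Ioi_exp_pos {f : ℝ → ℝ} {t : ℝ}
    (hf : IntegrableOn (fun x => exp (f x)) (Ioi t)) : 0 < ∫ x in Ioi t, exp (f x) :=
  have : NeZero (volume (Ioi t)) := ⟨by simp⟩
  integral_exp_pos hf

theorem eventually_exp_integral_le_mul_setIntegral_Ioi {q : ℝ → ℝ} {a ε : ℝ} (hε : 0 < ε)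
    (hq : ContinuousOn q (Ici a)) (hint : IntegrableOn (fun t => exp (∫ s in a..t, q s)) (Ioi a))
    (hqε : ∀ᶠ t in atTop, -ε ≤ q t) :
    ∀ᶠ t in atTop, exp (∫ s in a..t, q s) ≤ ε * ∫ s in Ioi t, exp (∫ r in a..s, q r) := by
  obtain ⟨T, hT⟩ := eventually_atTop.1 hqε
  filter_upwards [eventually_ge_atTop (max a T)] with t ht
  have hat : a ≤ t := le_of_max_le_left ht
  rw [← div_le_iff₀' hε]
  exact div_le_setIntegral_Ioi_of_mul_exp_le hε (hint.mono_set (Ioi_subset_Ioi hat))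
    fun s hs => exp_integral_mul_exp_le hq hat hs.le
      fun r hr => hT r ((le_of_max_le_right ht).trans hr.1)

theorem tendsto_exp_integral_div_setIntegral_Ioi {q : ℝ → ℝ} {a : ℝ}
    (hq : ContinuousOn q (Ici a)) (hint : IntegrableOn (fun t => exp (∫ s in a..t, q s)) (Ioi a))
    (hlim : Tendsto q atTop (𝓝 0)) :
    Tendsto (fun t => exp (∫ s in a..t, q s) / ∫ s in Ioi t, exp (∫ r in a..s, q r))
      atTop (𝓝 0) := by
  have htail_pos : ∀ᶠ t in atTop, 0 < ∫ s in Ioi t, exp (∫ r in a..s, q r) :=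
    (eventually_ge_atTop a).mono fun t ht =>
      setIntegral_Ioi_exp_pos (hint.mono_set (Ioi_subset_Ioi ht))
  refine tendsto_order.2 ⟨fun b hb => htail_pos.mono fun t ht => hb.trans_le (by positivity),
    fun b hb => ?_⟩
  have hε : 0 < b / 2 := by positivity
  filter_upwards [htail_pos, eventually_exp_integral_le_mul_setIntegral_Ioi hε hq hint
    (hlim.eventually_const_le (by linarith))] with t hpos hle
  rw [div_lt_iff₀ hpos]
  linarith [mul_lt_mul_of_pos_right (half_lt_self hb) hpos]

theorem exists_pos_mul_le_abs_inv_add {x I : ℝ} (hI : 0 < I) (hx : x ≠ 0) (hxI : -(1 / I) ≤ x) :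
    ∃ c > 0, ∀ {F J : ℝ}, 0 ≤ F → F + J = I → c * J ≤ |x⁻¹ + F| := by
  rcases hx.lt_or_gt with hneg | hpos
  · have hinv : x⁻¹ ≤ -I := by
      rwa [inv_le_of_neg hneg (neg_neg_of_pos hI), inv_neg, ← one_div]
    refine ⟨1, one_pos, fun {F J} _ hFJ => ?_⟩
    linarith [neg_le_abs (x⁻¹ + F)]
  · refine ⟨(x * I)⁻¹, by positivity, fun {F J} hF hFJ => ?_⟩
    calc (x * I)⁻¹ * J ≤ (x * I)⁻¹ * I := by gcongr; linarith
      _ = x⁻¹ := by field_simp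
      _ ≤ |x⁻¹ + F| := by linarith [le_abs_self (x⁻¹ + F)]

theorem tendsto_zero_of_hasDerivWithinAt_bernoulli {q w : ℝ → ℝ} {a I : ℝ}
    (hq : ContinuousOn q (Ici a))
    (hw : ∀ t ≥ a, HasDerivWithinAt w (q t * w t - w t ^ 2) (Ici a) t)
    (hint : IntegrableOn (fun t => exp (∫ s in a..t, q s)) (Ioi a))
    (hI : I = ∫ t in Ioi a, exp (∫ s in a..t, q s))
    (hlim : Tendsto q atTop (𝓝 0)) (hw0 : -(1 / I) ≤ w a) :
    Tendsto w atTop (𝓝 0) := by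
  set E : ℝ → ℝ := fun t => exp (∫ s in a..t, q s)
  set F : ℝ → ℝ := fun t => ∫ s in a..t, E s
  set J : ℝ → ℝ := fun t => ∫ s in Ioi t, E s
  have hE_pos : ∀ t, 0 < E t := fun t => exp_pos _
  have hw_exp : ∀ t ≥ a, w t = w a * exp (∫ s in a..t, (q - w) s) := fun t =>
    eq_mul_exp_integral_of_hasDerivWithinAt (hq.sub fun t ht => (hw t ht).continuousWithinAt)
      (fun t ht => (hw t ht).congr_deriv (by simp only [Pi.sub_apply]; ring))
  rcases eq_or_ne (w a) 0 with h0 | h0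
  · refine tendsto_const_nhds.congr' ((eventually_ge_atTop a).mono fun t ht => ?_)
    rw [hw_exp t ht, h0, zero_mul]
  have hw_ne : ∀ t ≥ a, w t ≠ 0 := fun t ht => by
    rw [hw_exp t ht]; exact mul_ne_zero h0 (exp_ne_zero _)
  have hF_nonneg : ∀ t ≥ a, 0 ≤ F t := fun t ht =>
    intervalIntegral.integral_nonneg ht fun s _ => (hE_pos s).le
  have hJ_pos : ∀ t ≥ a, 0 < J t := fun t ht =>
    setIntegral_Ioi_exp_pos (hint.mono_set (Ioi_subset_Ioi ht))
  have hsplit : ∀ t ≥ a, F t + J t = I := fun t ht =>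
    hI ▸ integral_interval_add_Ioi hint (hint.mono_set (Ioi_subset_Ioi ht))
  have hI_pos : 0 < I := by
    have := hsplit a le_rfl
    simp only [F, integral_same, zero_add] at this
    exact this ▸ hJ_pos a le_rfl
  obtain ⟨c, hc, hden⟩ := exists_pos_mul_le_abs_inv_add hI_pos h0 hw0
  refine squeeze_zero_norm' ?_
    (by simpa using (tendsto_exp_integral_div_setIntegral_Ioi hq hint hlim).const_mul c⁻¹)
  filter_upwards [eventually_ge_atTop a] with t ht
  have hrepr : (w t)⁻¹ * E t = (w a)⁻¹ + F t :=
    inv_mul_exp_integral_eq_of_hasDerivWithinAt hq hw hw_ne ht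
  calc ‖w t‖ = E t / |(w a)⁻¹ + F t| := by
        rw [← hrepr, abs_mul, abs_inv, abs_of_pos (hE_pos t), Real.norm_eq_abs]
        field_simp [hw_ne t ht, (hE_pos t).ne']
    _ ≤ E t / (c * J t) :=
        div_le_div_of_nonneg_left (hE_pos t).le (mul_pos hc (hJ_pos t ht))
          (hden (hF_nonneg t ht) (hsplit t ht))
    _ = c⁻¹ * (E t / J t) := by ring

theorem stmt14_general (a γ p : ℝ → ℝ) (k I : ℝ)
    (ha : ContinuousOn a (Set.Ici (0:ℝ)))
    (hp : ∀ t ≥ (0:ℝ), HasDerivWithinAt p (a t * p t - p t ^ 2 - k * γ t) (Set.Ici (0:ℝ)) t)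
    (hint : IntegrableOn (fun t => Real.exp (∫ s in (0:ℝ)..t, a s - 2 * p s)) (Set.Ioi (0:ℝ)))
    (hI : I = ∫ t in Set.Ioi (0:ℝ), Real.exp (∫ s in (0:ℝ)..t, a s - 2 * p s))
    (hlim : Tendsto (fun t => a t - 2 * p t) atTop (nhds 0)) :
    ∀ z : ℝ → ℝ,
      (∀ t ≥ (0:ℝ), HasDerivWithinAt z (a t * z t - z t ^ 2 - k * γ t) (Set.Ici (0:ℝ)) t) →
      z 0 ≥ p 0 - 1 / I →
      Tendsto (fun t => z t - p t) atTop (nhds 0) := by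
  intro z hz hz0
  have hp_cont : ContinuousOn p (Ici 0) := fun t ht => (hp t ht).continuousWithinAt
  refine tendsto_zero_of_hasDerivWithinAt_bernoulli (q := fun t => a t - 2 * p t)
    (ha.sub (continuousOn_const.mul hp_cont)) (fun t ht => ?_) hint hI hlim (by linarith)
  exact ((hz t ht).fun_sub (hp t ht)).congr_deriv (by ring)

theorem stmt14 (a γ p : ℝ → ℝ) (k a₁ a₂ γ₁ γ₂ I : ℝ)
    (ha : ContinuousOn a (Set.Ici (0:ℝ)))
    (hγ : ContinuousOn γ (Set.Ici (0:ℝ)))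
    (ha₁ : 0 < a₁) (hγ₁ : 0 < γ₁)
    (haB : ∀ t ≥ (0:ℝ), a₁ ≤ a t ∧ a t ≤ a₂)
    (hγB : ∀ t ≥ (0:ℝ), γ₁ ≤ γ t ∧ γ t ≤ γ₂)
    (hk : 0 < k)
    (hp : ∀ t ≥ (0:ℝ), HasDerivWithinAt p (a t * p t - p t ^ 2 - k * γ t) (Set.Ici (0:ℝ)) t)
    (hppos : ∀ t ≥ (0:ℝ), 0 < p t)
    (hpbd : ∃ M : ℝ, ∀ t ≥ (0:ℝ), |p t| ≤ M)
    (hint : IntegrableOn (fun t => Real.exp (∫ s in (0:ℝ)..t, a s - 2 * p s)) (Set.Ioi (0:ℝ)))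
    (hI : I = ∫ t in Set.Ioi (0:ℝ), Real.exp (∫ s in (0:ℝ)..t, a s - 2 * p s))
    (hneg : ∃ t₀ ≥ (0:ℝ), ∀ t ≥ t₀, a t - 2 * p t ≤ 0)
    (hlim : Tendsto (fun t => a t - 2 * p t) atTop (nhds 0)) :
    ∀ z : ℝ → ℝ,
      (∀ t ≥ (0:ℝ), HasDerivWithinAt z (a t * z t - z t ^ 2 - k * γ t) (Set.Ici (0:ℝ)) t) →
      z 0 ≥ p 0 - 1 / I →
      Tendsto (fun t => z t - p t) atTop (nhds 0) :=
  stmt14_general a γ p k I ha hp hint hI hlim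
end

section
/- Let a, γ : [0,∞) → ℝ be continuous and bounded above and below by positive constants, let k > 0, and let p : [0,∞) → ℝ be a positive bounded differentiable solution of z'(t) = a(t)z(t) − z(t)² − kγ(t). Assume I := ∫₀^∞ exp(∫₀^t (a(s) − 2p(s)) ds) dt < ∞. Set μ(t) = exp(∫₀^t (a(s) − 2p(s)) ds) and p₁(t) = p(t) + μ(t)/(−I + ∫₀^t μ(s) ds). Then p₁ is a differentiable solution of the same equation on [0,∞) with p₁(0) = p(0) − 1/I, p₁(t) > 0 for all t ≥ 0, p₁ is bounded, p₁(t) < p(t) for all t ≥ 0, and ∫₀^∞ (p(t) − p₁(t)) dt = ∞; that is, p₁ is a positive bounded solution separated from p. -/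
/-!
Put `μ = exp ∫₀ᵗ (a - 2p)` and `F = -I + ∫₀ᵗ μ = -∫ₜ^∞ μ < 0`. Since `F' = μ` and
`μ' = (a - 2p) μ`, the function `p₁ = p + μ / F` solves the same Riccati equation.
Positivity of `p₁` is equivalent to `F + μ / p < 0`. This function has derivative
`k γ μ / p² > 0`; if it ever became nonnegative it would eventually exceed some `ε > 0`,
giving `p ≤ μ / ε` and `p' ≤ max a₂ 0 · μ / ε - k γ₁`, so `p` would decrease without bound
because `∫ μ < ∞`. Finally `p - p₁ = -(log (-F))'` and `F → 0`, so
`∫₀^S (p - p₁) = log I - log (-F S) → ∞`.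
-/

open Real Filter MeasureTheory Set intervalIntegral Topology

lemma hasDerivWithinAt_integral_Ici {f : ℝ → ℝ} {x₀ b : ℝ} (hf : ContinuousOn f (Ici x₀))
    (hb : x₀ ≤ b) : HasDerivWithinAt (fun u => ∫ x in x₀..u, f x) (f b) (Ici x₀) b := by
  have hfi : IntervalIntegrable f volume x₀ b :=
    (hf.mono (ordConnected_Ici.uIcc_subset le_rfl hb)).intervalIntegrable
  rcases hb.eq_or_lt with rfl | hb
  · exact integral_hasDerivWithinAt_right (t := Ioi x₀) hfi
      ⟨Ici x₀, mem_of_superset self_mem_nhdsWithin Ioi_subset_Ici_self,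
        hf.aestronglyMeasurable measurableSet_Ici⟩
      ((hf x₀ self_mem_Ici).mono Ioi_subset_Ici_self)
  · exact (integral_hasDerivAt_right hfi
      ((hf.mono Ioi_subset_Ici_self).stronglyMeasurableAtFilter isOpen_Ioi b hb)
      ((hf b hb.le).continuousAt (Ici_mem_nhds hb))).hasDerivWithinAt

lemma integral_Ioi_pos_of_pos {μ : ℝ → ℝ} {t : ℝ} (hμ : IntegrableOn μ (Ioi t))
    (hpos : ∀ s > t, 0 < μ s) : 0 < ∫ s in Ioi t, μ s := by
  rw [setIntegral_pos_iff_support_of_nonneg_ae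
    ((ae_restrict_iff' measurableSet_Ioi).2 (ae_of_all _ fun s hs => (hpos s hs).le)) hμ]
  have hsupp : Function.support μ ∩ Ioi t = Ioi t :=
    inter_eq_right.2 fun s hs => (hpos s hs).ne'
  simp [hsupp]

lemma intervalIntegral_lt_integral_Ioi {μ : ℝ → ℝ} {x₀ t : ℝ} (hμ : IntegrableOn μ (Ioi x₀))
    (hpos : ∀ s > x₀, 0 < μ s) (ht : x₀ ≤ t) : ∫ s in x₀..t, μ s < ∫ s in Ioi x₀, μ s := by
  rw [← integral_Ioi_sub_Ioi hμ ht, sub_lt_self_iff]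
  exact integral_Ioi_pos_of_pos (hμ.mono_set (Ioi_subset_Ioi ht))
    fun s hs => hpos s (ht.trans_lt hs)

section Riccati

variable {p μ F : ℝ → ℝ} {s : Set ℝ} {x a h : ℝ}

lemma HasDerivWithinAt.riccati_add_div (hp : HasDerivWithinAt p (a * p x - p x ^ 2 - h) s x)
    (hμ : HasDerivWithinAt μ ((a - 2 * p x) * μ x) s x) (hF : HasDerivWithinAt F (μ x) s x)
    (hFx : F x ≠ 0) :
    HasDerivWithinAt (fun t => p t + μ t / F t)
      (a * (p x + μ x / F x) - (p x + μ x / F x) ^ 2 - h) s x := by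
  refine (hp.add (hμ.div hF hFx)).congr_deriv ?_
  field_simp
  ring

lemma HasDerivWithinAt.add_div_of_riccati (hp : HasDerivWithinAt p (a * p x - p x ^ 2 - h) s x)
    (hμ : HasDerivWithinAt μ ((a - 2 * p x) * μ x) s x) (hF : HasDerivWithinAt F (μ x) s x)
    (hpx : p x ≠ 0) :
    HasDerivWithinAt (fun t => F t + μ t / p t) (μ x * h / p x ^ 2) s x := by
  refine (hF.add (hμ.div hp hpx)).congr_deriv ?_
  field_simp
  ring

end Riccati

lemma exists_nonpos_of_hasDerivWithinAt_le_sub {p G p' G' : ℝ → ℝ} {T B c : ℝ} (hc : 0 < c)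
    (hp : ∀ t ≥ T, HasDerivWithinAt p (p' t) (Ici T) t)
    (hG : ∀ t ≥ T, HasDerivWithinAt G (G' t) (Ici T) t)
    (hle : ∀ t > T, p' t ≤ G' t - c) (hGB : ∀ t ≥ T, G t ≤ B) : ∃ t ≥ T, p t ≤ 0 := by
  have hq : ∀ t ≥ T, HasDerivWithinAt (fun t => p t - G t + c * t) (p' t - G' t + c) (Ici T) t :=
    fun t ht => ((hp t ht).sub (hG t ht)).add
      (by simpa using (hasDerivWithinAt_id t (Ici T)).const_mul c)
  have hanti : AntitoneOn (fun t => p t - G t + c * t) (Ici T) := by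
    refine antitoneOn_of_hasDerivWithinAt_nonpos (f' := fun t => p' t - G' t + c) (convex_Ici T)
      (fun t ht => (hq t ht).continuousWithinAt) (fun t ht => ?_) (fun t ht => ?_)
    · rw [interior_Ici] at ht ⊢
      exact (hq t ht.le).mono Ioi_subset_Ici_self
    · rw [interior_Ici] at ht
      linarith [hle t ht]
  set d := p T - G T + B
  have hT : T ≤ T + |d| / c := le_add_of_nonneg_right (by positivity)
  refine ⟨T + |d| / c, hT, ?_⟩
  have h1 := hanti self_mem_Ici hT hT
  have h2 := hGB _ hT
  have h3 : c * (T + |d| / c) = c * T + |d| := by field_simp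
  simp only at h1
  linarith [le_abs_self d]

section RiccatiSolution

variable {a h p μ F : ℝ → ℝ}

lemma strictMonoOn_add_div_of_riccati
    (hp : ∀ t ≥ 0, HasDerivWithinAt p (a t * p t - p t ^ 2 - h t) (Ici 0) t)
    (hμ : ∀ t ≥ 0, HasDerivWithinAt μ ((a t - 2 * p t) * μ t) (Ici 0) t)
    (hF : ∀ t ≥ 0, HasDerivWithinAt F (μ t) (Ici 0) t)
    (hppos : ∀ t ≥ 0, 0 < p t) (hμpos : ∀ t ≥ 0, 0 < μ t) (hhpos : ∀ t ≥ 0, 0 < h t) :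
    StrictMonoOn (fun t => F t + μ t / p t) (Ici 0) := by
  have hH : ∀ t ≥ 0, HasDerivWithinAt (fun t => F t + μ t / p t) (μ t * h t / p t ^ 2) (Ici 0) t :=
    fun t ht => (hp t ht).add_div_of_riccati (hμ t ht) (hF t ht) (hppos t ht).ne'
  refine strictMonoOn_of_hasDerivWithinAt_pos (f' := fun t => μ t * h t / p t ^ 2) (convex_Ici 0)
    (fun t ht => (hH t ht).continuousWithinAt) (fun t ht => ?_) (fun t ht => ?_)
  · rw [interior_Ici] at ht ⊢
    exact (hH t ht.le).mono Ioi_subset_Ici_self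
  · rw [interior_Ici] at ht
    have := hppos t ht.le
    have := hμpos t ht.le
    have := hhpos t ht.le
    positivity

lemma riccati_add_div_pos {C h₀ : ℝ} (hh₀ : 0 < h₀) (haC : ∀ t ≥ 0, a t ≤ C)
    (hh : ∀ t ≥ 0, h₀ ≤ h t)
    (hp : ∀ t ≥ 0, HasDerivWithinAt p (a t * p t - p t ^ 2 - h t) (Ici 0) t)
    (hμ : ∀ t ≥ 0, HasDerivWithinAt μ ((a t - 2 * p t) * μ t) (Ici 0) t)
    (hF : ∀ t ≥ 0, HasDerivWithinAt F (μ t) (Ici 0) t)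
    (hppos : ∀ t ≥ 0, 0 < p t) (hμpos : ∀ t ≥ 0, 0 < μ t) (hFneg : ∀ t ≥ 0, F t < 0)
    {t : ℝ} (ht : 0 ≤ t) : 0 < p t + μ t / F t := by
  have hH := strictMonoOn_add_div_of_riccati hp hμ hF hppos hμpos
    fun t ht => hh₀.trans_le (hh t ht)
  suffices hHt : F t + μ t / p t < 0 by
    have h1 : p t * F t + μ t < 0 := by
      have := mul_neg_of_neg_of_pos hHt (hppos t ht)
      rwa [add_mul, div_mul_cancel₀ _ (hppos t ht).ne', mul_comm] at this
    have h2 : (p t + μ t / F t) * F t < 0 := by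
      rwa [add_mul, div_mul_cancel₀ _ (hFneg t ht).ne]
    exact pos_of_mul_neg_left h2 (hFneg t ht).le
  by_contra! hH0
  have hsub : Ici (t + 1) ⊆ Ici 0 := Ici_subset_Ici.2 (by linarith)
  have ht₁ : t < t + 1 := lt_add_one t
  set ε := F (t + 1) + μ (t + 1) / p (t + 1)
  have hε : 0 < ε := hH0.trans_lt (hH ht (by simp only [mem_Ici]; linarith) ht₁)
  have hple : ∀ s ≥ t + 1, p s ≤ μ s / ε := fun s hs => by
    have hs0 : 0 ≤ s := by linarith
    have h1 : ε ≤ F s + μ s / p s := hH.monotoneOn (by simp only [mem_Ici]; linarith) hs0 hs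
    rw [le_div_iff₀ hε, ← le_div_iff₀' (hppos s hs0)]
    linarith [hFneg s hs0]
  have hderiv : ∀ s > t + 1, a s * p s - p s ^ 2 - h s ≤ max C 0 / ε * μ s - h₀ := by
    intro s hs
    have hs0 : 0 ≤ s := hsub hs.le
    have h1 : a s * p s ≤ max C 0 * p s :=
      mul_le_mul_of_nonneg_right ((haC s hs0).trans (le_max_left _ _)) (hppos s hs0).le
    have h2 : max C 0 * p s ≤ max C 0 * (μ s / ε) :=
      mul_le_mul_of_nonneg_left (hple s hs.le) (le_max_right _ _)
    have h3 : max C 0 * (μ s / ε) = max C 0 / ε * μ s := by ring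
    nlinarith [hh s hs0]
  have hGB : ∀ s ≥ t + 1, max C 0 / ε * F s ≤ 0 := fun s hs =>
    mul_nonpos_of_nonneg_of_nonpos (by positivity) (hFneg s (hsub hs)).le
  obtain ⟨s, hs, hps⟩ := exists_nonpos_of_hasDerivWithinAt_le_sub hh₀
    (fun s hs => (hp s (hsub hs)).mono hsub)
    (fun s hs => ((hF s (hsub hs)).const_mul (max C 0 / ε)).mono hsub) hderiv hGB
  exact (hppos s (hsub hs)).not_ge hps

end RiccatiSolution

lemma tendsto_integral_neg_div_atTop {μ F : ℝ → ℝ}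
    (hF : ∀ t ≥ 0, HasDerivWithinAt F (μ t) (Ici 0) t) (hμ : ContinuousOn μ (Ici 0))
    (hFneg : ∀ t ≥ 0, F t < 0) (hF0 : Tendsto F atTop (𝓝 0)) :
    Tendsto (fun S => ∫ t in (0:ℝ)..S, -(μ t / F t)) atTop atTop := by
  have hFc : ContinuousOn F (Ici 0) := fun t ht => (hF t ht).continuousWithinAt
  have hint : ∀ S ≥ 0, ∫ t in (0:ℝ)..S, -(μ t / F t) = log (-F 0) - log (-F S) := by
    intro S hS
    have hsub : Icc 0 S ⊆ Ici 0 := Icc_subset_Ici_self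
    rw [integral_eq_sub_of_hasDeriv_right_of_le hS (f := fun t => -log (-F t))]
    · ring
    · exact ((hFc.mono hsub).neg.log fun t ht => neg_ne_zero.2 (hFneg t ht.1).ne).neg
    · intro t ht
      have hFt : HasDerivAt F (μ t) t := (hF t ht.1.le).hasDerivAt (Ici_mem_nhds ht.1)
      refine (hFt.neg.log (neg_ne_zero.2 (hFneg t ht.1.le).ne)).neg.hasDerivWithinAt.congr_deriv ?_
      rw [Pi.neg_apply]
      ring
    · exact ((hμ.mono hsub).div (hFc.mono hsub) fun t ht => (hFneg t ht.1).ne).neg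
        |>.intervalIntegrable_of_Icc hS
  have hlog : Tendsto (fun S => log (-F S)) atTop atBot :=
    tendsto_log_nhdsGT_zero.comp <| tendsto_nhdsWithin_iff.2
      ⟨by simpa using hF0.neg, (eventually_ge_atTop 0).mono fun S hS => neg_pos.2 (hFneg S hS)⟩
  refine (tendsto_atTop_add_const_left _ (log (-F 0))
    (tendsto_neg_atBot_atTop.comp hlog)).congr' ?_
  filter_upwards [eventually_ge_atTop 0] with S hS
  rw [hint S hS, Function.comp_apply, sub_eq_add_neg]

theorem stmt15_general (a γ p : ℝ → ℝ) (k a₁ a₂ γ₁ γ₂ I : ℝ)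
    (ha : ContinuousOn a (Set.Ici (0:ℝ)))
    (hγ₁ : 0 < γ₁)
    (haB : ∀ t ≥ (0:ℝ), a₁ ≤ a t ∧ a t ≤ a₂)
    (hγB : ∀ t ≥ (0:ℝ), γ₁ ≤ γ t ∧ γ t ≤ γ₂)
    (hk : 0 < k)
    (hp : ∀ t ≥ (0:ℝ), HasDerivWithinAt p (a t * p t - p t ^ 2 - k * γ t) (Set.Ici (0:ℝ)) t)
    (hppos : ∀ t ≥ (0:ℝ), 0 < p t)
    (hpbd : ∃ M : ℝ, ∀ t ≥ (0:ℝ), |p t| ≤ M)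
    (hint : IntegrableOn (fun t => Real.exp (∫ s in (0:ℝ)..t, a s - 2 * p s)) (Set.Ioi (0:ℝ)))
    (hI : I = ∫ t in Set.Ioi (0:ℝ), Real.exp (∫ s in (0:ℝ)..t, a s - 2 * p s))
    (p₁ : ℝ → ℝ)
    (hp₁def : ∀ t : ℝ, p₁ t = p t +
      Real.exp (∫ s in (0:ℝ)..t, a s - 2 * p s) /
        (-I + ∫ s in (0:ℝ)..t, Real.exp (∫ u in (0:ℝ)..s, a u - 2 * p u))) :
    (∀ t ≥ (0:ℝ), HasDerivWithinAt p₁ (a t * p₁ t - p₁ t ^ 2 - k * γ t) (Set.Ici (0:ℝ)) t) ∧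
    p₁ 0 = p 0 - 1 / I ∧
    (∀ t ≥ (0:ℝ), 0 < p₁ t) ∧
    (∃ M : ℝ, ∀ t ≥ (0:ℝ), |p₁ t| ≤ M) ∧
    (∀ t ≥ (0:ℝ), p₁ t < p t) ∧
    Tendsto (fun S => ∫ t in (0:ℝ)..S, p t - p₁ t) atTop atTop := by
  set μ : ℝ → ℝ := fun t => exp (∫ s in (0:ℝ)..t, a s - 2 * p s)
  set F : ℝ → ℝ := fun t => -I + ∫ s in (0:ℝ)..t, μ s
  obtain rfl : p₁ = fun t => p t + μ t / F t := funext hp₁def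
  have hpc : ContinuousOn p (Ici 0) := fun t ht => (hp t ht).continuousWithinAt
  have hf : ContinuousOn (fun s => a s - 2 * p s) (Ici 0) := ha.sub (continuousOn_const.mul hpc)
  have hμ : ∀ t ≥ 0, HasDerivWithinAt μ ((a t - 2 * p t) * μ t) (Ici 0) t := fun t ht =>
    (hasDerivWithinAt_integral_Ici hf ht).exp.congr_deriv (mul_comm _ _)
  have hμc : ContinuousOn μ (Ici 0) := fun t ht => (hμ t ht).continuousWithinAt
  have hF : ∀ t ≥ 0, HasDerivWithinAt F (μ t) (Ici 0) t := fun t ht =>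
    (hasDerivWithinAt_integral_Ici hμc ht).const_add (-I)
  have hFneg : ∀ t ≥ 0, F t < 0 := fun t ht => by
    linarith [hI ▸ intervalIntegral_lt_integral_Ioi hint (fun s _ => exp_pos _) ht]
  have hF0 : Tendsto F atTop (𝓝 0) := by
    have := (intervalIntegral_tendsto_integral_Ioi 0 hint tendsto_id).const_add (-I)
    rwa [← hI, neg_add_cancel] at this
  have hp₁pos : ∀ t ≥ 0, 0 < p t + μ t / F t := fun t ht =>
    riccati_add_div_pos (mul_pos hk hγ₁) (fun t ht => (haB t ht).2)
      (fun t ht => mul_le_mul_of_nonneg_left (hγB t ht).1 hk.le) hp hμ hF hppos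
      (fun t _ => exp_pos _) hFneg ht
  have hp₁lt : ∀ t ≥ 0, p t + μ t / F t < p t := fun t ht =>
    add_lt_of_neg_right _ (div_neg_of_pos_of_neg (exp_pos _) (hFneg t ht))
  obtain ⟨M, hM⟩ := hpbd
  refine ⟨fun t ht => (hp t ht).riccati_add_div (hμ t ht) (hF t ht) (hFneg t ht).ne, ?_, hp₁pos,
    ⟨M, fun t ht => abs_le.2 ⟨?_, (hp₁lt t ht).le.trans ((le_abs_self _).trans (hM t ht))⟩⟩,
    hp₁lt, ?_⟩
  · simp [μ, F, div_neg, sub_eq_add_neg]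
  · linarith [hp₁pos t ht, (abs_nonneg _).trans (hM t ht)]
  · simpa using tendsto_integral_neg_div_atTop hF hμc hFneg hF0

theorem stmt15 (a γ p : ℝ → ℝ) (k a₁ a₂ γ₁ γ₂ I : ℝ)
    (ha : ContinuousOn a (Set.Ici (0:ℝ)))
    (hγ : ContinuousOn γ (Set.Ici (0:ℝ)))
    (ha₁ : 0 < a₁) (hγ₁ : 0 < γ₁)
    (haB : ∀ t ≥ (0:ℝ), a₁ ≤ a t ∧ a t ≤ a₂)
    (hγB : ∀ t ≥ (0:ℝ), γ₁ ≤ γ t ∧ γ t ≤ γ₂)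
    (hk : 0 < k)
    (hp : ∀ t ≥ (0:ℝ), HasDerivWithinAt p (a t * p t - p t ^ 2 - k * γ t) (Set.Ici (0:ℝ)) t)
    (hppos : ∀ t ≥ (0:ℝ), 0 < p t)
    (hpbd : ∃ M : ℝ, ∀ t ≥ (0:ℝ), |p t| ≤ M)
    (hint : IntegrableOn (fun t => Real.exp (∫ s in (0:ℝ)..t, a s - 2 * p s)) (Set.Ioi (0:ℝ)))
    (hI : I = ∫ t in Set.Ioi (0:ℝ), Real.exp (∫ s in (0:ℝ)..t, a s - 2 * p s))
    (p₁ : ℝ → ℝ)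
    (hp₁def : ∀ t : ℝ, p₁ t = p t +
      Real.exp (∫ s in (0:ℝ)..t, a s - 2 * p s) /
        (-I + ∫ s in (0:ℝ)..t, Real.exp (∫ u in (0:ℝ)..s, a u - 2 * p u))) :
    (∀ t ≥ (0:ℝ), HasDerivWithinAt p₁ (a t * p₁ t - p₁ t ^ 2 - k * γ t) (Set.Ici (0:ℝ)) t) ∧
    p₁ 0 = p 0 - 1 / I ∧
    (∀ t ≥ (0:ℝ), 0 < p₁ t) ∧
    (∃ M : ℝ, ∀ t ≥ (0:ℝ), |p₁ t| ≤ M) ∧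
    (∀ t ≥ (0:ℝ), p₁ t < p t) ∧
    Tendsto (fun S => ∫ t in (0:ℝ)..S, p t - p₁ t) atTop atTop :=
  stmt15_general a γ p k a₁ a₂ γ₁ γ₂ I ha hγ₁ haB hγB hk hp hppos hpbd hint hI p₁ hp₁def
end
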